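/- Let n ≥ 3, let W be a four-linear form on ℝⁿ with the symmetries of a Weyl tensor, and let h_{ij}(x) = (1/3)∑_{p,q=1}^n W_{ipjq} x_p x_q. Then ∫_{𝕊^{n−1}} ∑_{i,j,l=1}^n (∂_i h_{jl}(x))² dσ(x) = (ω_{n−1}/(9n)) ∑_{k=1}^n T_{kk}, where the integral is over the unit sphere 𝕊^{n−1} ⊂ ℝⁿ with its canonical measure σ and ω_{n−1} = σ(𝕊^{n−1}). -/

import Mathlib

open MeasureTheory Real

noncomputable section

/-- The Euclidean space `ℝⁿ`. -/
abbrev En (n : ℕ) := EuclideanSpace ℝ (Fin n)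

/-- Partial derivative in the `i`-th coordinate direction. -/
noncomputable def pd {n : ℕ} (i : Fin n) (f : En n → ℝ) (x : En n) : ℝ :=
  fderiv ℝ f x (EuclideanSpace.single i 1)

/-- `W` has the symmetries of a Weyl tensor. -/
def IsWeyl (n : ℕ) (W : Fin n → Fin n → Fin n → Fin n → ℝ) : Prop :=
  (∀ i j k l, W i j k l = -W j i k l) ∧
  (∀ i j k l, W i j k l = -W i j l k) ∧
  (∀ i j k l, W i j k l = W k l i j) ∧
  (∀ j l, ∑ i, W i j i l = 0) ∧
  (∀ i j k l, W i j k l + W j k i l + W k i j l = 0)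

/-- `T_{kl} = ∑_{p,q,r} (W_{kpqr}+W_{krqp})(W_{lpqr}+W_{lrqp})`. -/
def Tkl (n : ℕ) (W : Fin n → Fin n → Fin n → Fin n → ℝ) (k l : Fin n) : ℝ :=
  ∑ p, ∑ q, ∑ r, (W k p q r + W k r q p) * (W l p q r + W l r q p)

/-- The quadratic field associated to `W`: `h_{ij}(x) = (1/3)∑_{p,q} W_{ipjq} x_p x_q`. -/
noncomputable def hW (n : ℕ) (W : Fin n → Fin n → Fin n → Fin n → ℝ)
    (x : En n) (i j : Fin n) : ℝ :=
  (1 / 3) * ∑ p, ∑ q, W i p j q * x p * x q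

/-- The canonical surface measure on the unit sphere `𝕊^{n-1} ⊂ ℝⁿ`. -/
noncomputable def sphereMeasure (n : ℕ) :
    Measure (Metric.sphere (0 : En n) 1) :=
  (volume : Measure (En n)).toSphere

/-- `ω_{n-1}`, the total canonical measure of the unit sphere `𝕊^{n-1} ⊂ ℝⁿ`. -/
noncomputable def omegaSphere (n : ℕ) : ℝ := (sphereMeasure n Set.univ).toReal

/-!
The partial derivative `∂_i h_{jl}` is the linear form `(1/3) ∑_q (W_{jilq} + W_{jqli}) x_q`.
Since `σ` is invariant under linear isometries, reflecting one coordinate and swapping two show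
`∫ x_q x_r dσ = δ_{qr} ω_{n-1} / n`, so `∫ (∑_q a_q x_q)² dσ = (ω_{n-1} / n) ∑_q a_q²`.
With `a_q = W_{jilq} + W_{jqli}`, summing over `i, j, l` reproduces `∑_k T_{kk} / 9`.
-/

open Metric Pointwise

section SphereIsometry

variable {E : Type*} [NormedAddCommGroup E] [NormedSpace ℝ E] [MeasurableSpace E] [BorelSpace E]

def LinearIsometryEquiv.restrictUnitSphere (e : E ≃ₗᵢ[ℝ] E) :
    sphere (0 : E) 1 ≃ₜ sphere (0 : E) 1 :=
  e.toHomeomorph.subtype fun x => by simp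

theorem LinearIsometryEquiv.measurePreserving_restrictUnitSphere {μ : Measure E}
    (e : E ≃ₗᵢ[ℝ] E) (he : MeasurePreserving e μ μ) :
    MeasurePreserving e.restrictUnitSphere μ.toSphere μ.toSphere := by
  have hmeas := e.restrictUnitSphere.continuous.measurable
  refine ⟨hmeas, Measure.ext fun s hs => ?_⟩
  have hval : ((↑) '' (e.restrictUnitSphere ⁻¹' s) : Set E) = e ⁻¹' ((↑) '' s) := by
    rw [← Homeomorph.image_symm, Set.image_image, ← e.symm_symm, ← e.symm.image_eq_preimage_symm,
      Set.image_image]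
    rfl
  have hsmul : Set.Ioo (0 : ℝ) 1 • e ⁻¹' ((↑) '' s) = e ⁻¹' (Set.Ioo (0 : ℝ) 1 • (↑) '' s) := by
    ext z
    simp only [Set.mem_smul, Set.mem_preimage]
    constructor
    · rintro ⟨r, hr, y, hy, rfl⟩
      exact ⟨r, hr, e y, hy, (e.map_smul r y).symm⟩
    · rintro ⟨r, hr, y, hy, hyz⟩
      exact ⟨r, hr, e.symm y, by simpa using hy, e.injective (by simpa using hyz)⟩
  rw [Measure.map_apply hmeas hs, Measure.toSphere_apply' _ (hmeas hs),
    Measure.toSphere_apply' _ hs, hval, hsmul,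
    he.measure_preimage_emb e.toHomeomorph.measurableEmbedding]

theorem LinearIsometryEquiv.integral_toSphere_comp {μ : Measure E} (e : E ≃ₗᵢ[ℝ] E)
    (he : MeasurePreserving e μ μ) {G : Type*} [NormedAddCommGroup G] [NormedSpace ℝ G]
    (f : E → G) :
    ∫ x : sphere (0 : E) 1, f (e x) ∂μ.toSphere = ∫ x : sphere (0 : E) 1, f x ∂μ.toSphere :=
  (e.measurePreserving_restrictUnitSphere he).integral_comp
    e.restrictUnitSphere.measurableEmbedding fun x => f x

end SphereIsometry

section SphereMoments

variable {n : ℕ}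

def reflectCoord (p : Fin n) : En n ≃ₗᵢ[ℝ] En n :=
  LinearIsometryEquiv.piLpCongrRight 2 fun q =>
    if q = p then LinearIsometryEquiv.neg ℝ else LinearIsometryEquiv.refl ℝ ℝ

theorem reflectCoord_apply (p q : Fin n) (x : En n) :
    reflectCoord p x q = if q = p then -x q else x q := by
  by_cases h : q = p <;> simp [reflectCoord, h]

theorem integral_sphere_comp_linearIsometryEquiv (e : En n ≃ₗᵢ[ℝ] En n) (f : En n → ℝ) :
    ∫ x : sphere (0 : En n) 1, f (e x) ∂sphereMeasure n =
      ∫ x : sphere (0 : En n) 1, f x ∂sphereMeasure n :=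
  e.integral_toSphere_comp e.measurePreserving f

instance : IsFiniteMeasure (sphereMeasure n) :=
  inferInstanceAs (IsFiniteMeasure (volume : Measure (En n)).toSphere)

theorem integrable_sphereMeasure_of_continuous {f : sphere (0 : En n) 1 → ℝ}
    (hf : Continuous f) :
    Integrable f (sphereMeasure n) :=
  hf.integrable_of_hasCompactSupport (HasCompactSupport.of_compactSpace f)

theorem integral_sphere_coord_mul_coord_of_ne {p q : Fin n} (hpq : p ≠ q) :
    ∫ x : sphere (0 : En n) 1, (x : En n) p * (x : En n) q ∂sphereMeasure n = 0 := by
  have h := integral_sphere_comp_linearIsometryEquiv (reflectCoord p) fun x => x p * x q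
  simp only [reflectCoord_apply, if_true, if_neg hpq.symm, neg_mul, integral_neg] at h
  linarith

theorem integral_sphere_coord_sq (p : Fin n) :
    ∫ x : sphere (0 : En n) 1, (x : En n) p ^ 2 ∂sphereMeasure n = omegaSphere n / n := by
  have hswap (q : Fin n) : ∫ x : sphere (0 : En n) 1, (x : En n) q ^ 2 ∂sphereMeasure n =
      ∫ x : sphere (0 : En n) 1, (x : En n) p ^ 2 ∂sphereMeasure n := by
    have h := integral_sphere_comp_linearIsometryEquiv
      (LinearIsometryEquiv.piLpCongrLeft 2 ℝ ℝ (Equiv.swap p q)) fun x => x q ^ 2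
    simpa [LinearIsometryEquiv.piLpCongrLeft_apply, Equiv.piCongrLeft'_apply] using h.symm
  have hsum :
      ∑ q, ∫ x : sphere (0 : En n) 1, (x : En n) q ^ 2 ∂sphereMeasure n = omegaSphere n := by
    have hunit (x : sphere (0 : En n) 1) : ∑ q, (x : En n) q ^ 2 = 1 := by
      rw [← EuclideanSpace.real_norm_sq_eq, norm_eq_of_mem_sphere, one_pow]
    rw [← integral_finsetSum _ fun q _ => integrable_sphereMeasure_of_continuous (by fun_prop)]
    simp [hunit, omegaSphere, Measure.real]
  simp only [hswap, Finset.sum_const, Finset.card_univ, Fintype.card_fin, nsmul_eq_mul] at hsum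
  have hn : (0 : ℝ) < n := by exact_mod_cast p.pos
  rw [← hsum, mul_div_cancel_left₀ _ hn.ne']

theorem integral_sphere_coord_mul_coord (q r : Fin n) :
    ∫ x : sphere (0 : En n) 1, (x : En n) q * (x : En n) r ∂sphereMeasure n =
      if q = r then omegaSphere n / n else 0 := by
  split_ifs with hqr
  · simpa [hqr, sq] using integral_sphere_coord_sq r
  · exact integral_sphere_coord_mul_coord_of_ne hqr

theorem integral_sphere_sq_sum_mul_coord (a : Fin n → ℝ) :
    ∫ x : sphere (0 : En n) 1, (∑ q, a q * (x : En n) q) ^ 2 ∂sphereMeasure n =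
      omegaSphere n / n * ∑ q, a q ^ 2 := by
  have hexpand (x : En n) :
      (∑ q, a q * x q) ^ 2 = ∑ q, ∑ r, a q * a r * (x q * x r) := by
    rw [sq, Finset.sum_mul_sum]
    exact Finset.sum_congr rfl fun q _ => Finset.sum_congr rfl fun r _ => by ring
  have hint (q r : Fin n) : Integrable (fun x : sphere (0 : En n) 1 =>
      a q * a r * ((x : En n) q * (x : En n) r)) (sphereMeasure n) :=
    integrable_sphereMeasure_of_continuous (by fun_prop)
  simp_rw [hexpand]
  rw [integral_finsetSum _ fun q _ => integrable_finsetSum _ fun r _ => hint q r]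
  simp_rw [integral_finsetSum _ fun r _ => hint _ r]
  simp [integral_const_mul, integral_sphere_coord_mul_coord, Finset.mul_sum, sq, mul_comm]

end SphereMoments

section Derivative

variable {n : ℕ}

theorem hasFDerivAt_sum_mul_coord_mul_coord (A : Fin n → Fin n → ℝ) (x : En n) :
    HasFDerivAt (fun y : En n => ∑ p, ∑ q, A p q * y p * y q)
      (∑ p, ∑ q, ((A p q * x p) • (EuclideanSpace.proj q : En n →L[ℝ] ℝ) +
        x q • A p q • (EuclideanSpace.proj p : En n →L[ℝ] ℝ))) x := by
  have hproj (p : Fin n) :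
      HasFDerivAt (fun y : En n => y p) (EuclideanSpace.proj p : En n →L[ℝ] ℝ) x :=
    (EuclideanSpace.proj p : En n →L[ℝ] ℝ).hasFDerivAt
  exact HasFDerivAt.fun_sum fun p _ => HasFDerivAt.fun_sum fun q _ =>
    ((hproj p).const_mul (A p q)).mul (hproj q)

theorem pd_const_mul_sum_mul_coord_mul_coord (c : ℝ) (A : Fin n → Fin n → ℝ) (i : Fin n)
    (x : En n) :
    pd i (fun y => c * ∑ p, ∑ q, A p q * y p * y q) x = c * ∑ q, (A i q + A q i) * x q := by
  rw [pd, ((hasFDerivAt_sum_mul_coord_mul_coord A x).const_mul c).fderiv]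
  simp only [smul_apply, sum_apply, add_apply, PiLp.proj_apply, PiLp.single_apply, smul_eq_mul,
    mul_ite, mul_one, mul_zero, Finset.sum_add_distrib, Finset.sum_ite_eq', Finset.sum_ite_irrel,
    Finset.sum_const_zero, Finset.mem_univ, if_true]
  rw [← Finset.sum_add_distrib]
  exact congrArg _ (Finset.sum_congr rfl fun q _ => by ring)

end Derivative

theorem pd_hW (n : ℕ) (W : Fin n → Fin n → Fin n → Fin n → ℝ) (i j l : Fin n) (x : En n) :
    pd i (fun y => hW n W y j l) x = 1 / 3 * ∑ q, (W j i l q + W j q l i) * x q :=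
  pd_const_mul_sum_mul_coord_mul_coord _ (fun p q => W j p l q) i x

theorem integral_sphere_sq_pd_hW (n : ℕ) (W : Fin n → Fin n → Fin n → Fin n → ℝ)
    (i j l : Fin n) :
    ∫ x : sphere (0 : En n) 1, pd i (fun y => hW n W y j l) x ^ 2 ∂sphereMeasure n =
      omegaSphere n / (9 * n) * ∑ q, (W j i l q + W j q l i) ^ 2 := by
  simp_rw [pd_hW, mul_pow, integral_const_mul, integral_sphere_sq_sum_mul_coord]
  ring

theorem stmt10 (n : ℕ) (W : Fin n → Fin n → Fin n → Fin n → ℝ) :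
    (∫ x : Metric.sphere (0 : En n) 1,
        ∑ i, ∑ j, ∑ l, (pd i (fun y => hW n W y j l) (x : En n)) ^ 2
          ∂(sphereMeasure n)) =
      omegaSphere n / (9 * (n : ℝ)) * ∑ k, Tkl n W k k := by
  have hint (i j l : Fin n) : Integrable
      (fun x : sphere (0 : En n) 1 => pd i (fun y => hW n W y j l) x ^ 2) (sphereMeasure n) := by
    simp_rw [pd_hW]
    exact integrable_sphereMeasure_of_continuous (by fun_prop)
  rw [integral_finsetSum _ fun i _ => integrable_finsetSum _ fun j _ =>
    integrable_finsetSum _ fun l _ => hint i j l]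
  simp_rw [integral_finsetSum _ fun j _ => integrable_finsetSum _ fun l _ => hint _ j l,
    integral_finsetSum _ fun l _ => hint _ _ l, integral_sphere_sq_pd_hW]
  rw [Finset.sum_comm]
  simp only [Tkl, Finset.mul_sum, sq]
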